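/- Conditional termination of the SR calculus: every infinite SR-execution applies the Collect, Train, or Strategize rules infinitely often; equivalently, any SR-execution in which the Collect, Train and Strategize rules are applied only finitely many times is finite. -/
import Mathlib


open scoped Classical

/-- The result of evaluating a formula with a strategy: `sat` or `unsat`. -/
inductive Result where
  | sat
  | unsat
deriving DecidableEq

/-- Configurations of the SR calculus: `Success`, `Failure`, or a tuple
`⟨i, v, D, O⟩` of an index, a strategy, a finite dataset and an oracle. -/
inductive SRConfig (V : Type) where
  | success
  | failure
  | state (i : ℕ) (v : V) (D : Finset (V × ℕ × ℝ)) (O : V → ℕ → ℝ)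

/-- Names of the rules of the SR calculus. -/
inductive SRRule where
  | next
  | failure
  | success
  | collect
  | train
  | strategize
deriving DecidableEq

/-- The transition relation `⟹` of the SR calculus, labelled by which rule is
applied, with bound `N`, evaluation function `Eval`, cost function `cost`, and
learning algorithm `fit`. -/
inductive SRLStep {V : Type} (N : ℕ) (Eval : ℕ → V → Result) (cost : ℕ → V → ℝ)
    (fit : Finset (V × ℕ × ℝ) → V → ℕ → ℝ) : SRRule → SRConfig V → SRConfig V → Prop
  | next {i : ℕ} {v : V} {D : Finset (V × ℕ × ℝ)} {O : V → ℕ → ℝ} :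
      i < N → Eval i v = Result.unsat →
      SRLStep N Eval cost fit SRRule.next
        (SRConfig.state i v D O) (SRConfig.state (i + 1) v D O)
  | failure {v : V} {D : Finset (V × ℕ × ℝ)} {O : V → ℕ → ℝ} :
      Eval N v = Result.unsat →
      SRLStep N Eval cost fit SRRule.failure (SRConfig.state N v D O) SRConfig.failure
  | success {i : ℕ} {v : V} {D : Finset (V × ℕ × ℝ)} {O : V → ℕ → ℝ} :
      Eval i v = Result.sat →
      SRLStep N Eval cost fit SRRule.success (SRConfig.state i v D O) SRConfig.success
  | collect {i : ℕ} {v : V} {D : Finset (V × ℕ × ℝ)} {O : V → ℕ → ℝ}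
      (vₛ : V) (j : ℕ) : 1 ≤ j → j ≤ i →
      SRLStep N Eval cost fit SRRule.collect (SRConfig.state i v D O)
        (SRConfig.state i v (insert (vₛ, j, cost j vₛ) D) O)
  | train {i : ℕ} {v : V} {D : Finset (V × ℕ × ℝ)} {O : V → ℕ → ℝ} :
      SRLStep N Eval cost fit SRRule.train
        (SRConfig.state i v D O) (SRConfig.state i v D (fit D))
  | strategize {i : ℕ} {v : V} {D : Finset (V × ℕ × ℝ)} {O : V → ℕ → ℝ}
      (Vₛ : Finset V) (v' : V) : Vₛ.Nonempty → v' ∈ Vₛ → (∀ w ∈ Vₛ, O v' i ≤ O w i) →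
      SRLStep N Eval cost fit SRRule.strategize
        (SRConfig.state i v D O) (SRConfig.state i v' D O)

/-- Conditional termination of the SR calculus: every infinite SR-execution
applies the `Collect`, `Train`, or `Strategize` rules infinitely often. -/
theorem sr_conditional_termination {V : Type} (N : ℕ) (hN : 1 ≤ N)
    (Eval : ℕ → V → Result) (cost : ℕ → V → ℝ) (fit : Finset (V × ℕ × ℝ) → V → ℕ → ℝ)
    (C : ℕ → SRConfig V) (r : ℕ → SRRule)
    (hstep : ∀ n : ℕ, SRLStep N Eval cost fit (r n) (C n) (C (n + 1))) :
    ∀ m : ℕ, ∃ n : ℕ, m ≤ n ∧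
      (r n = SRRule.collect ∨ r n = SRRule.train ∨ r n = SRRule.strategize) := by
  by_contra h
  push_neg at h
  obtain ⟨m, hm⟩ := h
  -- every configuration in the execution is a state
  have hstate : ∀ n, ∃ i v D O, C n = SRConfig.state i v D O := by
    intro n
    cases hs : C n with
    | success =>
        have h1 := hstep n
        rw [hs] at h1
        generalize r n = rn at h1
        cases h1
    | failure =>
        have h1 := hstep n
        rw [hs] at h1
        generalize r n = rn at h1
        cases h1
    | state i v D O => exact ⟨i, v, D, O, rfl⟩
  -- from step m on, every rule is `next`
  have key : ∀ n, m ≤ n → ∀ i v D O, C n = SRConfig.state i v D O →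
      i < N ∧ C (n + 1) = SRConfig.state (i + 1) v D O := by
    intro n hn i v D O hC
    have hr := hm n hn
    have h1 := hstep n
    rw [hC] at h1
    obtain ⟨i', v', D', O', hC'⟩ := hstate (n + 1)
    rw [hC'] at h1
    generalize hrn : r n = rn at h1 hr
    cases h1 with
    | next hi _ => exact ⟨hi, hC'⟩
    | collect _ _ _ _ => simp at hr
    | train => simp at hr
    | strategize _ _ _ _ _ => simp at hr
  obtain ⟨i0, v0, D0, O0, hC0⟩ := hstate m
  have main : ∀ k, C (m + k) = SRConfig.state (i0 + k) v0 D0 O0 := by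
    intro k
    induction k with
    | zero => simpa using hC0
    | succ k ih =>
        exact (key (m + k) (Nat.le_add_right m k) _ _ _ _ ih).2
  have hlt := (key (m + N) (Nat.le_add_right m N) _ _ _ _ (main N)).1
  omega
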